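/- arXiv:1508.04953 — 3 statements merged into one kernel-verified Lean document; each statement's English description precedes it below -/
import Mathlib

section
/- For every natural number n, the Pell numbers satisfy P_{5n} = 64·P_n^5 + 40·(-1)^n·P_n^3 + 5·P_n. -/
def pell : ℕ → ℤ
  | 0 => 0
  | 1 => 1
  | n + 2 => 2 * pell (n + 1) + pell n

lemma pell_cassini (n : ℕ) :
    pell (n+1) ^ 2 - 2 * pell (n+1) * pell n - pell n ^ 2 = (-1 : ℤ) ^ n := by
  induction n with
  | zero => simp [pell]
  | succ k ih =>
    have h : pell (k+2) = 2 * pell (k+1) + pell k := rfl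
    rw [h, pow_succ]
    linear_combination (-1 : ℤ) * ih

lemma pell_jump (m : ℕ) : pell (m+10) = 82 * pell (m+5) + pell m := by
  have h10 : pell (m+10) = 2 * pell (m+9) + pell (m+8) := rfl
  have h9 : pell (m+9) = 2 * pell (m+8) + pell (m+7) := rfl
  have h8 : pell (m+8) = 2 * pell (m+7) + pell (m+6) := rfl
  have h7 : pell (m+7) = 2 * pell (m+6) + pell (m+5) := rfl
  have h6 : pell (m+6) = 2 * pell (m+5) + pell (m+4) := rfl
  have h5 : pell (m+5) = 2 * pell (m+4) + pell (m+3) := rfl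
  have h4 : pell (m+4) = 2 * pell (m+3) + pell (m+2) := rfl
  have h3 : pell (m+3) = 2 * pell (m+2) + pell (m+1) := rfl
  have h2 : pell (m+2) = 2 * pell (m+1) + pell m := rfl
  linarith

lemma pell_five_aux (n : ℕ) :
    pell (5 * n) = 64 * pell n ^ 5 + 40 * (-1 : ℤ) ^ n * pell n ^ 3 + 5 * pell n ∧
    pell (5 * (n+1)) = 64 * pell (n+1) ^ 5 + 40 * (-1 : ℤ) ^ (n+1) * pell (n+1) ^ 3
      + 5 * pell (n+1) := by
  induction n with
  | zero =>
    constructor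
    · norm_num [pell]
    · show pell 5 = _
      have : pell 5 = 29 := by norm_num [pell]
      rw [this]; norm_num [show pell 1 = 1 from rfl]
  | succ k ih =>
    obtain ⟨h1, h2⟩ := ih
    refine ⟨h2, ?_⟩
    have hj : pell (5 * (k+2)) = 82 * pell (5 * (k+1)) + pell (5 * k) := by
      have := pell_jump (5 * k)
      have e1 : 5 * (k+2) = 5 * k + 10 := by ring
      have e2 : 5 * (k+1) = 5 * k + 5 := by ring
      rw [e1, e2, this]
    have hc := pell_cassini k
    have hr : pell (k+2) = 2 * pell (k+1) + pell k := rfl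
    rw [hj, h1, h2, hr]
    have hs : ((-1 : ℤ)) ^ (k+2) = (-1)^k := by rw [pow_succ, pow_succ]; ring
    rw [hs, show ((-1 : ℤ)) ^ (k+1) = -(-1)^k by rw [pow_succ]; ring]
    have hs2 : ((-1 : ℤ) ^ k) ^ 2 = 1 := by
      rw [← pow_mul, mul_comm, pow_mul]; norm_num
    set x := pell k
    set y := pell (k+1)
    set w := (-1 : ℤ) ^ k
    linear_combination (3200*y^3 + 1280*x*y^2 + 640*x^2*y - 400*w*y) * hc - 400*y*hs2

theorem pell_five_mul (n : ℕ) :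
    pell (5 * n) = 64 * pell n ^ 5 + 40 * (-1 : ℤ) ^ n * pell n ^ 3 + 5 * pell n := by
  exact (pell_five_aux n).1
end

section
/- For all natural numbers m and n, the Pell and Pell-Lucas numbers satisfy Σ_{k=1}^{n} P_{2k}^{2m+1} = Σ_{i=0}^{m} P_{2n+1}^{2i+1} · Σ_{j=0}^{m−i} ((-1)^{m+i} · 2^{3(i−m)} · (2m−2j+1) / (Q_{2m+1−2j} · (2i+1))) · C(2m+1, j) · C(m−j+i, 2i) + Σ_{j=0}^{m} ((-1)^{j+1} · P_{2m+1−2j} / (2^{3m} · Q_{2m+1−2j})) · C(2m+1, j), as an equality of rational numbers, where C(a,b) denotes the binomial coefficient. -/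
def pellLucas : ℕ → ℤ
  | 0 => 2
  | 1 => 2
  | n + 2 => 2 * pellLucas (n + 1) + pellLucas n

open Finset

theorem Finset.sum_range_two_mul_add_two {M : Type*} [AddCommMonoid M] (f : ℕ → M) (m : ℕ) :
    ∑ k ∈ range (2 * m + 2), f k = ∑ j ∈ range (m + 1), (f j + f (2 * m + 1 - j)) := by
  rw [show 2 * m + 2 = (m + 1) + (m + 1) by ring, sum_range_add, sum_add_distrib,
    ← sum_range_reflect (fun j => f (m + 1 + j))]
  refine congrArg _ (sum_congr rfl fun j hj => ?_)
  rw [mem_range] at hj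
  congr 1
  omega

theorem Nat.choose_second_difference (n k : ℕ) :
    ((n + 2).choose (k + 2) : ℤ) - 2 * (n + 1).choose (k + 2) + n.choose (k + 2) = n.choose k := by
  simp only [Nat.choose_succ_succ (n + 1), Nat.choose_succ_succ n]
  push_cast
  ring

-- An integral form of `(-1) ^ (t + i) * (2 * t + 1) / (2 * i + 1) * (t + i).choose (2 * i)`
-- (`dicksonCoeff_eq`), so that the expansion in `y - z` below holds over any commutative ring.
def dicksonCoeff (t i : ℕ) : ℤ :=
  (-1) ^ (t + i) * ((t + i).choose (2 * i) + 2 * (t + i).choose (2 * i + 1))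

theorem dicksonCoeff_eq_zero {t i : ℕ} (h : t < i) : dicksonCoeff t i = 0 := by
  simp [dicksonCoeff, Nat.choose_eq_zero_of_lt (by omega : t + i < 2 * i),
    Nat.choose_eq_zero_of_lt (by omega : t + i < 2 * i + 1)]

theorem dicksonCoeff_add_two_zero (t : ℕ) :
    dicksonCoeff (t + 2) 0 + 2 * dicksonCoeff (t + 1) 0 + dicksonCoeff t 0 = 0 := by
  simp only [dicksonCoeff, add_zero, mul_zero, zero_add, Nat.choose_zero_right, Nat.choose_one_right,
    pow_succ]
  push_cast
  ring

theorem dicksonCoeff_add_two_succ (t i : ℕ) :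
    dicksonCoeff (t + 2) (i + 1) + 2 * dicksonCoeff (t + 1) (i + 1) + dicksonCoeff t (i + 1) =
      dicksonCoeff (t + 1) i := by
  have h₀ := Nat.choose_second_difference (t + i + 1) (2 * i)
  have h₁ := Nat.choose_second_difference (t + i + 1) (2 * i + 1)
  simp only [dicksonCoeff, show t + 2 + (i + 1) = t + i + 1 + 2 by ring,
    show t + 1 + (i + 1) = t + i + 1 + 1 by ring, show t + (i + 1) = t + i + 1 by ring,
    show t + 1 + i = t + i + 1 by ring, show 2 * (i + 1) = 2 * i + 2 by ring,
    show 2 * i + 2 + 1 = 2 * i + 1 + 2 by ring, pow_succ]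
  linear_combination -(-1) ^ (t + i) * (h₀ + 2 * h₁)

theorem dicksonCoeff_eq (t i : ℕ) :
    (dicksonCoeff t i : ℚ) = (-1) ^ (t + i) * (2 * t + 1) / (2 * i + 1) * (t + i).choose (2 * i) := by
  rcases lt_or_ge t i with h | h
  · simp [dicksonCoeff_eq_zero h, Nat.choose_eq_zero_of_lt (by omega : t + i < 2 * i)]
  · have hc := Nat.choose_succ_right_eq (t + i) (2 * i)
    rw [show t + i - 2 * i = t - i by omega] at hc
    have hc' : ((t + i).choose (2 * i + 1) : ℚ) * (2 * i + 1) =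
        (t + i).choose (2 * i) * (t - i) := by
      exact_mod_cast hc
    field_simp
    simp only [dicksonCoeff]
    push_cast
    linear_combination (2 * (-1) ^ (t + i) : ℚ) * hc'

section CommRing

variable {R : Type*} [CommRing R]

theorem sub_pow_two_mul_add_one_of_mul_eq_one {x y : R} (h : x * y = 1) (m : ℕ) :
    (x - y) ^ (2 * m + 1) =
      ∑ j ∈ range (m + 1), (-1) ^ j * ((2 * m + 1).choose j : R) *
        (x ^ (2 * m + 1 - 2 * j) - y ^ (2 * m + 1 - 2 * j)) := by
  rw [sub_pow, sum_range_two_mul_add_two]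
  refine sum_congr rfl fun j hj => ?_
  obtain ⟨e, rfl⟩ : ∃ e, m = j + e := ⟨m - j, by simp at hj; omega⟩
  have hxy : x ^ j * y ^ j = 1 := by rw [← mul_pow, h, one_pow]
  rw [Nat.choose_symm (by omega), show 2 * (j + e) + 1 - j = j + (2 * e + 1) by omega,
    show 2 * (j + e) + 1 - (j + (2 * e + 1)) = j by omega,
    show 2 * (j + e) + 1 - 2 * j = 2 * e + 1 by omega,
    pow_add, pow_add (-1 : R) (j + _), pow_add (-1 : R) j (2 * e + 1),
    Odd.neg_one_pow ⟨j + e, rfl⟩, Odd.neg_one_pow ⟨e, rfl⟩, pow_add x, pow_add y]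
  linear_combination
    (-1) ^ j * ((2 * (j + e) + 1).choose j : R) * (x ^ (2 * e + 1) - y ^ (2 * e + 1)) * hxy

theorem sum_range_dicksonCoeff_mul {t N : ℕ} (h : t < N) (f : ℕ → R) :
    ∑ i ∈ range N, dicksonCoeff t i * f i = ∑ i ∈ range (t + 1), dicksonCoeff t i * f i := by
  refine (sum_subset (range_subset_range.2 h) fun i _ hit => ?_).symm
  simp [dicksonCoeff_eq_zero (by simpa using hit : t < i)]

theorem sum_range_dicksonCoeff_add_two (t : ℕ) (s : R) :
    ∑ i ∈ range (t + 3), dicksonCoeff (t + 2) i * s ^ (2 * i + 1) =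
      (s ^ 2 - 2) * ∑ i ∈ range (t + 2), dicksonCoeff (t + 1) i * s ^ (2 * i + 1) -
        ∑ i ∈ range (t + 1), dicksonCoeff t i * s ^ (2 * i + 1) := by
  have key : ∑ i ∈ range (t + 3), ((dicksonCoeff (t + 2) i + 2 * dicksonCoeff (t + 1) i +
      dicksonCoeff t i : ℤ) : R) * s ^ (2 * i + 1) =
      s ^ 2 * ∑ i ∈ range (t + 2), dicksonCoeff (t + 1) i * s ^ (2 * i + 1) := by
    simp only [sum_range_succ' _ (t + 2), dicksonCoeff_add_two_succ, dicksonCoeff_add_two_zero,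
      Int.cast_zero, zero_mul, add_zero, mul_sum]
    exact sum_congr rfl fun i _ => by ring
  have e₁ := sum_range_dicksonCoeff_mul (by omega : t + 1 < t + 3) fun i => s ^ (2 * i + 1)
  have e₀ := sum_range_dicksonCoeff_mul (by omega : t < t + 3) fun i => s ^ (2 * i + 1)
  simp only [Int.cast_add, Int.cast_mul, Int.cast_ofNat, add_mul, sum_add_distrib, mul_assoc,
    ← mul_sum] at key
  linear_combination key - 2 * e₁ - e₀

theorem pow_sub_pow_two_mul_add_one_of_mul_eq_neg_one {y z : R} (h : y * z = -1) (t : ℕ) :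
    y ^ (2 * t + 1) - z ^ (2 * t + 1) =
      ∑ i ∈ range (t + 1), dicksonCoeff t i * (y - z) ^ (2 * i + 1) := by
  induction t using Nat.twoStepInduction with
  | zero => simp [dicksonCoeff]
  | one =>
    have h₀ : dicksonCoeff 1 0 = -3 := rfl
    have h₁ : dicksonCoeff 1 1 = 1 := rfl
    rw [sum_range_succ, sum_range_one, h₀, h₁]
    push_cast
    linear_combination 3 * (y - z) * h
  | more t ih₀ ih₁ =>
    -- both sides satisfy u (t + 2) = ((y - z) ^ 2 - 2) * u (t + 1) - u t
    rw [sum_range_dicksonCoeff_add_two, ← ih₀, ← ih₁]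
    linear_combination ((y * z - 1) * (z ^ (2 * t + 1) - y ^ (2 * t + 1)) +
      2 * (y ^ (2 * t + 3) - z ^ (2 * t + 3))) * h

theorem pow_add_two_of_sq_eq {x : R} (hx : x ^ 2 = 2 * x + 1) (n : ℕ) :
    x ^ (n + 2) = 2 * x ^ (n + 1) + x ^ n := by
  rw [pow_add, hx]
  ring

variable {α β : R}

theorem pell_binet (hsum : α + β = 2) (hprod : α * β = -1) (n : ℕ) :
    (α - β) * pell n = α ^ n - β ^ n := by
  have hα := pow_add_two_of_sq_eq (x := α) (by linear_combination α * hsum - hprod)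
  have hβ := pow_add_two_of_sq_eq (x := β) (by linear_combination β * hsum - hprod)
  induction n using Nat.twoStepInduction with
  | zero => simp [pell]
  | one => simp [pell]
  | more n ih₀ ih₁ =>
    rw [pell, hα, hβ]
    push_cast
    linear_combination 2 * ih₁ + ih₀

theorem pellLucas_binet (hsum : α + β = 2) (hprod : α * β = -1) (n : ℕ) :
    (pellLucas n : R) = α ^ n + β ^ n := by
  have hα := pow_add_two_of_sq_eq (x := α) (by linear_combination α * hsum - hprod)
  have hβ := pow_add_two_of_sq_eq (x := β) (by linear_combination β * hsum - hprod)
  induction n using Nat.twoStepInduction with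
  | zero => norm_num [pellLucas]
  | one => simp [pellLucas, hsum]
  | more n ih₀ ih₁ =>
    rw [pellLucas, hα, hβ]
    push_cast
    linear_combination 2 * ih₁ + ih₀

theorem sub_sq_eq_eight (hsum : α + β = 2) (hprod : α * β = -1) : (α - β) ^ 2 = 8 := by
  linear_combination (α + β + 2) * hsum - 4 * hprod

end CommRing

/-- Identities between Pell numbers are checked on Binet's formulas with the roots `α`, `β` of
`X ^ 2 - 2 * X - 1` kept abstract, so that `ring` treats them as atoms. -/
theorem Int.eq_of_forall_pell_roots {x y : ℤ}
    (h : ∀ α β : ℝ, α + β = 2 → α * β = -1 → (α - β) * x = (α - β) * y) : x = y := by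
  have hne : (1 + √2 : ℝ) - (1 - √2) ≠ 0 := by
    have : (0 : ℝ) < √2 := by positivity
    linarith
  exact_mod_cast mul_left_cancel₀ hne
    (h _ _ (by ring) (by ring_nf; rw [Real.sq_sqrt (by norm_num)]; norm_num))

theorem pellLucas_pos (n : ℕ) : 0 < pellLucas n := by
  induction n using Nat.twoStepInduction with
  | zero => decide
  | one => decide
  | more n ih₀ ih₁ => rw [pellLucas]; positivity

theorem pellLucas_ne_zero (n : ℕ) : pellLucas n ≠ 0 :=
  (pellLucas_pos n).ne'

theorem pellLucas_mul_pell_add (a d : ℕ) :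
    pellLucas d * pell (a + d) = pell (a + 2 * d) + (-1) ^ d * pell a := by
  refine Int.eq_of_forall_pell_roots fun α β hsum hprod => ?_
  have hP := pell_binet hsum hprod
  push_cast
  rw [pellLucas_binet hsum hprod, ← hprod]
  linear_combination (α ^ d + β ^ d) * hP (a + d) - hP (a + 2 * d) - (α * β) ^ d * hP a

theorem pellLucas_mul_sum_pell_two_mul {d : ℕ} (hd : Odd d) (n : ℕ) :
    pellLucas d * ∑ k ∈ Icc 1 n, pell (2 * k * d) = pell ((2 * n + 1) * d) - pell d := by
  induction n with
  | zero => simp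
  | succ n ih =>
    have step := pellLucas_mul_pell_add ((2 * n + 1) * d) d
    rw [hd.neg_one_pow, show (2 * n + 1) * d + d = 2 * (n + 1) * d by ring,
      show (2 * n + 1) * d + 2 * d = (2 * (n + 1) + 1) * d by ring] at step
    rw [sum_Icc_succ_top (by omega), mul_add, ih, step]
    ring

theorem eight_pow_mul_pell_two_mul_pow (k m : ℕ) :
    8 ^ m * pell (2 * k) ^ (2 * m + 1) =
      ∑ j ∈ range (m + 1),
        (-1) ^ j * ((2 * m + 1).choose j : ℤ) * pell (2 * k * (2 * m + 1 - 2 * j)) := by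
  refine Int.eq_of_forall_pell_roots fun α β hsum hprod => ?_
  have hP := pell_binet hsum hprod
  have hXY : α ^ (2 * k) * β ^ (2 * k) = 1 := by rw [← mul_pow, pow_mul, hprod]; norm_num
  push_cast
  calc (α - β) * (8 ^ m * pell (2 * k) ^ (2 * m + 1))
      = ((α - β) * pell (2 * k)) ^ (2 * m + 1) := by
        rw [mul_pow, pow_succ' (α - β), pow_mul, sub_sq_eq_eight hsum hprod, mul_assoc]
    _ = (α ^ (2 * k) - β ^ (2 * k)) ^ (2 * m + 1) := by rw [hP]
    _ = _ := sub_pow_two_mul_add_one_of_mul_eq_one hXY m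
    _ = _ := by
      rw [mul_sum]
      refine sum_congr rfl fun j _ => ?_
      rw [← pow_mul, ← pow_mul, ← hP]
      ring

theorem pell_mul_two_mul_add_one {e : ℕ} (he : Odd e) (t : ℕ) :
    pell (e * (2 * t + 1)) =
      ∑ i ∈ range (t + 1), dicksonCoeff t i * 8 ^ i * pell e ^ (2 * i + 1) := by
  refine Int.eq_of_forall_pell_roots fun α β hsum hprod => ?_
  have hP := pell_binet hsum hprod
  have hyz : α ^ e * β ^ e = -1 := by rw [← mul_pow, hprod, he.neg_one_pow]
  push_cast
  rw [hP, pow_mul, pow_mul, pow_sub_pow_two_mul_add_one_of_mul_eq_neg_one hyz, ← hP, mul_sum]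
  refine sum_congr rfl fun i _ => ?_
  rw [mul_pow, pow_succ' (α - β), pow_mul, sub_sq_eq_eight hsum hprod]
  ring

theorem sum_pell_two_mul_pow (m n : ℕ) :
    ∑ k ∈ Icc 1 n, (pell (2 * k) : ℚ) ^ (2 * m + 1) =
      ∑ j ∈ range (m + 1), (-1) ^ j * ((2 * m + 1).choose j : ℚ) *
        (pell ((2 * n + 1) * (2 * m + 1 - 2 * j)) - pell (2 * m + 1 - 2 * j)) /
          (2 ^ (3 * m) * pellLucas (2 * m + 1 - 2 * j)) := by
  have hpow (k : ℕ) : (pell (2 * k) : ℚ) ^ (2 * m + 1) = (8 ^ m)⁻¹ * ∑ j ∈ range (m + 1),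
      (-1) ^ j * ((2 * m + 1).choose j : ℚ) * pell (2 * k * (2 * m + 1 - 2 * j)) := by
    rw [eq_inv_mul_iff_mul_eq₀ (by positivity)]
    exact_mod_cast eight_pow_mul_pell_two_mul_pow k m
  have htel (j : ℕ) (hj : j ∈ range (m + 1)) :
      ∑ k ∈ Icc 1 n, (pell (2 * k * (2 * m + 1 - 2 * j)) : ℚ) =
        (pell ((2 * n + 1) * (2 * m + 1 - 2 * j)) - pell (2 * m + 1 - 2 * j)) /
          pellLucas (2 * m + 1 - 2 * j) := by
    rw [eq_div_iff (by simpa using pellLucas_ne_zero _), mul_comm]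
    exact_mod_cast pellLucas_mul_sum_pell_two_mul ⟨m - j, by simp at hj; omega⟩ n
  rw [sum_congr rfl fun k _ => hpow k, ← mul_sum, sum_comm, mul_sum]
  refine sum_congr rfl fun j hj => ?_
  rw [← mul_sum, htel j hj, show (2 : ℚ) ^ (3 * m) = 8 ^ m by rw [pow_mul]; norm_num]
  field_simp

theorem sum_choose_mul_pell_odd_mul_div (m n : ℕ) :
    ∑ j ∈ range (m + 1), (-1) ^ j * ((2 * m + 1).choose j : ℚ) *
        pell ((2 * n + 1) * (2 * m + 1 - 2 * j)) / (2 ^ (3 * m) * pellLucas (2 * m + 1 - 2 * j)) =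
      ∑ i ∈ range (m + 1), (pell (2 * n + 1) : ℚ) ^ (2 * i + 1) *
        ∑ j ∈ range (m - i + 1),
          ((-1 : ℚ) ^ (m + i) * 2 ^ (3 * i) / 2 ^ (3 * m) * (2 * (m : ℚ) - 2 * j + 1) /
              ((pellLucas (2 * m + 1 - 2 * j) : ℚ) * (2 * i + 1))) *
            (Nat.choose (2 * m + 1) j : ℚ) * (Nat.choose (m - j + i) (2 * i) : ℚ) := by
  have hd {j : ℕ} (hj : j ≤ m) : 2 * m + 1 - 2 * j = 2 * (m - j) + 1 := by omega
  calc _ = ∑ j ∈ range (m + 1), ∑ i ∈ range (m - j + 1),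
        (-1) ^ j * ((2 * m + 1).choose j : ℚ) / (2 ^ (3 * m) * pellLucas (2 * m + 1 - 2 * j)) *
          (dicksonCoeff (m - j) i * 8 ^ i * pell (2 * n + 1) ^ (2 * i + 1)) := by
        refine sum_congr rfl fun j hj => ?_
        rw [← mul_sum, hd (by simpa [Nat.lt_succ_iff] using hj),
          pell_mul_two_mul_add_one ⟨n, rfl⟩]
        push_cast
        ring
    _ = ∑ i ∈ range (m + 1), ∑ j ∈ range (m - i + 1),
        (-1) ^ j * ((2 * m + 1).choose j : ℚ) / (2 ^ (3 * m) * pellLucas (2 * m + 1 - 2 * j)) *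
          (dicksonCoeff (m - j) i * 8 ^ i * pell (2 * n + 1) ^ (2 * i + 1)) :=
        sum_comm' fun j i => by simp only [mem_range]; omega
    _ = _ := by
        refine sum_congr rfl fun i hi => ?_
        rw [mul_sum]
        refine sum_congr rfl fun j hj => ?_
        have hjm : j ≤ m := by simp at hi hj; omega
        rw [dicksonCoeff_eq, hd hjm, pow_mul, pow_mul]
        push_cast [hjm]
        rw [show (-1 : ℚ) ^ (m + i) = (-1) ^ j * (-1) ^ (m - j + i) by
          rw [← pow_add]; congr 1; omega]
        field_simp [pellLucas_ne_zero]
        ring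

theorem melham_sum (m n : ℕ) :
    (∑ k ∈ Finset.Icc 1 n, (pell (2 * k) : ℚ) ^ (2 * m + 1)) =
      (∑ i ∈ Finset.range (m + 1), (pell (2 * n + 1) : ℚ) ^ (2 * i + 1) *
        ∑ j ∈ Finset.range (m - i + 1),
          ((-1 : ℚ) ^ (m + i) * 2 ^ (3 * i) / 2 ^ (3 * m) * (2 * (m : ℚ) - 2 * j + 1) /
              ((pellLucas (2 * m + 1 - 2 * j) : ℚ) * (2 * i + 1))) *
            (Nat.choose (2 * m + 1) j : ℚ) * (Nat.choose (m - j + i) (2 * i) : ℚ)) +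
      ∑ j ∈ Finset.range (m + 1),
        ((-1 : ℚ) ^ (j + 1) * (pell (2 * m + 1 - 2 * j) : ℚ) /
            (2 ^ (3 * m) * (pellLucas (2 * m + 1 - 2 * j) : ℚ))) *
          (Nat.choose (2 * m + 1) j : ℚ) := by
  rw [sum_pell_two_mul_pow]
  simp_rw [mul_sub, sub_div, sum_sub_distrib]
  rw [sub_eq_add_neg, ← sum_neg_distrib, sum_choose_mul_pell_odd_mul_div]
  congr 1
  refine sum_congr rfl fun j _ => ?_
  field_simp [pellLucas_ne_zero]
  ring
end

section
/- For every natural number n, the Pell and Pell-Lucas numbers satisfy Q_1 · Q_3 · Q_5 · Σ_{k=1}^{n} P_{2k}^5 = 28·P_{2n+1}^5 − 120·P_{2n+1}^3 + 220·P_{2n+1} − 128. -/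
lemma pellid (n : ℕ) :
    pell (n + 1) ^ 2 - 2 * pell (n + 1) * pell n - pell n ^ 2 = (-1 : ℤ) ^ n := by
  induction n with
  | zero => simp [pell]
  | succ m ih =>
    rw [show m + 1 + 1 = m + 2 from rfl, pell, pow_succ]
    ring_nf
    ring_nf at ih
    linarith

theorem melham_fifth (n : ℕ) :
    pellLucas 1 * pellLucas 3 * pellLucas 5 * ∑ k ∈ Finset.Icc 1 n, pell (2 * k) ^ 5 =
      28 * pell (2 * n + 1) ^ 5 - 120 * pell (2 * n + 1) ^ 3 + 220 * pell (2 * n + 1) - 128 := by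
  induction n with
  | zero => norm_num [pell, pellLucas]
  | succ m ih =>
    rw [Finset.sum_Icc_succ_top (by omega : 1 ≤ m + 1), mul_add, ih]
    have h := pellid (2 * m + 1)
    have hodd : (-1 : ℤ) ^ (2 * m + 1) = -1 := by
      rw [pow_succ, pow_mul]; norm_num
    rw [hodd] at h
    have e1 : 2 * (m + 1) = 2 * m + 2 := by ring
    have e2 : 2 * m + 2 + 1 = 2 * m + 1 + 2 := by ring
    have e3 : pell (2 * m + 1 + 2) = 2 * pell (2 * m + 2) + pell (2 * m + 1) := rfl
    rw [e1, e2, e3]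
    set a := pell (2 * m + 1) with ha
    set b := pell (2 * m + 2) with hb
    simp only [pellLucas]
    linear_combination (1400 * b ^ 3 + 560 * a * b ^ 2 + 280 * a ^ 2 * b - 440 * b) * h
end
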